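/- arXiv:1508.02452 — 4 statements merged into one kernel-verified Lean document; each statement's English description precedes it below -/
import Mathlib

section
/- A vector θ ∈ ℝⁿ with θ₁ ≤ θ₂ ≤ … ≤ θₙ is the optimal solution of the isotonic regression problem if and only if the partial sums Sᵢ := Σ_{j=1}^{i} ωⱼ(yⱼ − θⱼ) satisfy: Sᵢ ≥ 0 for all 1 ≤ i ≤ n−1, Sₙ = 0, and Sᵢ·(θ_{i+1} − θᵢ) = 0 for all 1 ≤ i ≤ n−1. -/
/-!
The objective is a convex quadratic, so `θ` minimises it over the convex cone of monotone vectors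
iff the first-order condition `∑ rⱼ (θ'ⱼ - θⱼ) ≤ 0` holds for every monotone `θ'`, where
`rⱼ = ωⱼ (yⱼ - θⱼ)`. Summation by parts turns this sum into
`Sₙ (θ'ₙ - θₙ) + ∑_{i<n} Sᵢ ((θ'ᵢ - θ'ᵢ₊₁) + (θᵢ₊₁ - θᵢ))`, which is nonpositive under the KKT
conditions. Conversely, testing with `θ ± 1`, and with `θ` shifted on the prefix `{j ≤ i}` by `-1`
or by the gap `θᵢ₊₁ - θᵢ`, recovers them.
-/

open Finset

/-- The weighted least-squares objective of the isotonic regression problem. -/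
noncomputable def irObj (n : ℕ) (ω y θ : Fin n → ℝ) : ℝ :=
  (1/2) * ∑ i, ω i * (y i - θ i)^2

theorem convex_setOf_monotone {α 𝕜 β : Type*} [Preorder α] [Semiring 𝕜] [PartialOrder 𝕜]
    [AddCommMonoid β] [PartialOrder β] [IsOrderedAddMonoid β] [Module 𝕜 β] [PosSMulMono 𝕜 β] :
    Convex 𝕜 {f : α → β | Monotone f} :=
  fun _ hf _ hg _ _ ha hb _ => (hf.const_smul ha).add (hg.const_smul hb)

theorem nonneg_of_forall_mul_add_sq_mul_nonneg {a b : ℝ}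
    (h : ∀ t ∈ Set.Ioc (0 : ℝ) 1, 0 ≤ t * a + t ^ 2 * b) : 0 ≤ a := by
  have hlim : Filter.Tendsto (fun t : ℝ => a + t * b) (nhdsWithin 0 (Set.Ioi 0)) (nhds a) := by
    have hcont : Continuous fun t : ℝ => a + t * b := by fun_prop
    simpa using (hcont.tendsto 0).mono_left nhdsWithin_le_nhds
  refine ge_of_tendsto hlim ?_
  filter_upwards [Ioc_mem_nhdsGT zero_lt_one] with t ht
  nlinarith [h t ht, ht.1]

theorem Fin.sum_mul_eq_sum_Iic_mul_sub (n : ℕ) (r d : Fin (n + 1) → ℝ) :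
    ∑ j, r j * d j = ∑ i : Fin n, (∑ j ∈ Iic i.castSucc, r j) * (d i.castSucc - d i.succ)
      + (∑ j, r j) * d (Fin.last n) := by
  induction n with
  | zero => simp
  | succ n ih =>
    have hlast : ∑ j ∈ Iic (Fin.last n).castSucc, r j = ∑ j : Fin (n + 1), r j.castSucc := by
      rw [Fin.sum_Iic_castSucc, ← Fin.top_eq_last, Iic_top]
    rw [Fin.sum_univ_castSucc (fun j => r j * d j), ih,
      Fin.sum_univ_castSucc (f := fun i : Fin (n + 1) => _ * _), Fin.sum_univ_castSucc r, hlast]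
    simp only [Fin.sum_Iic_castSucc, Fin.succ_last, Fin.succ_castSucc]
    ring

theorem sum_mul_add_ite_sub {α : Type*} [Fintype α] [LinearOrder α] [LocallyFiniteOrderBot α]
    (r θ : α → ℝ) (k : α) (c : ℝ) :
    ∑ j, r j * ((θ j + if j ≤ k then c else 0) - θ j) = c * ∑ j ∈ Iic k, r j := by
  simp only [add_sub_cancel_left, mul_ite, mul_zero, sum_ite, sum_const_zero, add_zero,
    filter_ge_eq_Iic, ← sum_mul, mul_comm c]

theorem Monotone.add_ite_le_castSucc {n : ℕ} {θ : Fin (n + 1) → ℝ} (hθ : Monotone θ) (i : Fin n)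
    {c : ℝ} (hc : c ≤ θ i.succ - θ i.castSucc) :
    Monotone fun j => θ j + if j ≤ i.castSucc then c else 0 := by
  intro a b hab
  by_cases ha : a ≤ i.castSucc <;> by_cases hb : b ≤ i.castSucc
  · simpa [ha, hb] using hθ hab
  · have hib : i.succ ≤ b := Fin.castSucc_lt_iff_succ_le.mp (not_le.mp hb)
    simp only [ha, hb, if_true, if_false, add_zero]
    linarith [hθ ha, hθ hib]
  · exact absurd (hab.trans hb) ha
  · simpa [ha, hb] using hθ hab

theorem irObj_add_smul (n : ℕ) (ω y θ d : Fin n → ℝ) (t : ℝ) :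
    irObj n ω y (θ + t • d) = irObj n ω y θ - t * ∑ i, ω i * (y i - θ i) * d i
      + t ^ 2 * ((1 / 2) * ∑ i, ω i * d i ^ 2) := by
  simp only [irObj, Pi.add_apply, Pi.smul_apply, smul_eq_mul, mul_sum, ← sum_sub_distrib,
    ← sum_add_distrib]
  exact sum_congr rfl fun i _ => by ring

theorem isMinOn_irObj_iff {n : ℕ} {ω y θ : Fin n → ℝ} {C : Set (Fin n → ℝ)} (hω : ∀ i, 0 ≤ ω i)
    (hC : Convex ℝ C) (hθ : θ ∈ C) :
    IsMinOn (irObj n ω y) C θ ↔ ∀ θ' ∈ C, ∑ i, ω i * (y i - θ i) * (θ' i - θ i) ≤ 0 := by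
  constructor
  · intro hmin θ' hθ'
    refine neg_nonneg.mp (nonneg_of_forall_mul_add_sq_mul_nonneg
      (b := (1 / 2) * ∑ i, ω i * (θ' i - θ i) ^ 2) fun t ht => ?_)
    have hle := isMinOn_iff.mp hmin _ (hC.add_smul_sub_mem hθ hθ' (Set.Ioc_subset_Icc_self ht))
    simp only [irObj_add_smul, Pi.sub_apply] at hle
    linarith
  · intro h
    refine isMinOn_iff.mpr fun θ' hθ' => ?_
    have hexp := irObj_add_smul n ω y θ (θ' - θ) 1
    simp only [one_smul, add_sub_cancel, one_mul, one_pow, Pi.sub_apply] at hexp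
    have hquad : 0 ≤ ∑ i, ω i * (θ' i - θ i) ^ 2 :=
      sum_nonneg fun i _ => mul_nonneg (hω i) (sq_nonneg _)
    linarith [h θ' hθ']

theorem forall_monotone_sum_mul_sub_nonpos_iff {n : ℕ} {r θ : Fin (n + 1) → ℝ}
    (hθ : Monotone θ) :
    (∀ θ' : Fin (n + 1) → ℝ, Monotone θ' → ∑ j, r j * (θ' j - θ j) ≤ 0) ↔
      ((∀ i : Fin n, 0 ≤ ∑ j ∈ Iic i.castSucc, r j) ∧ ∑ j, r j = 0 ∧
        ∀ i : Fin n, (∑ j ∈ Iic i.castSucc, r j) * (θ i.succ - θ i.castSucc) = 0) := by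
  have hgap (i : Fin n) : 0 ≤ θ i.succ - θ i.castSucc :=
    sub_nonneg.mpr (hθ i.castSucc_le_succ)
  constructor
  · intro h
    have hbump (i : Fin n) {c : ℝ} (hc : c ≤ θ i.succ - θ i.castSucc) :
        c * ∑ j ∈ Iic i.castSucc, r j ≤ 0 := by
      simpa only [sum_mul_add_ite_sub] using h _ (hθ.add_ite_le_castSucc i hc)
    have hshift (c : ℝ) : c * ∑ j, r j ≤ 0 := by
      simpa only [add_sub_cancel_left, ← sum_mul, mul_comm c] using h _ (hθ.add_const c)
    have hS (i : Fin n) : 0 ≤ ∑ j ∈ Iic i.castSucc, r j := by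
      linarith [hbump i (c := -1) (by linarith [hgap i])]
    refine ⟨hS, by linarith [hshift 1, hshift (-1)], fun i => ?_⟩
    exact le_antisymm (by linarith [hbump i le_rfl]) (mul_nonneg (hS i) (hgap i))
  · rintro ⟨hS, htotal, hcompl⟩ θ' hθ'
    rw [Fin.sum_mul_eq_sum_Iic_mul_sub, htotal, zero_mul, add_zero]
    refine sum_nonpos fun i _ => ?_
    have hstep : θ' i.castSucc - θ' i.succ ≤ 0 := sub_nonpos.mpr (hθ' i.castSucc_le_succ)
    nlinarith [hS i, hcompl i]

/-- KKT characterization of the optimal solution of isotonic regression: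
a monotone `θ` is optimal iff the partial sums `Sᵢ = ∑_{j ≤ i} ωⱼ(yⱼ - θⱼ)` satisfy
`Sᵢ ≥ 0` for `i < n`, `Sₙ = 0`, and complementarity `Sᵢ (θ_{i+1} - θᵢ) = 0`. -/
theorem isotonic_regression_kkt
    (n : ℕ) (y ω θ : Fin (n+1) → ℝ) (hω : ∀ i, 0 < ω i) (hθ : Monotone θ) :
    (∀ θ' : Fin (n+1) → ℝ, Monotone θ' → irObj (n+1) ω y θ ≤ irObj (n+1) ω y θ') ↔
      ((∀ i : Fin n, 0 ≤ ∑ j ∈ Finset.Iic i.castSucc, ω j * (y j - θ j)) ∧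
       (∑ j, ω j * (y j - θ j)) = 0 ∧
       (∀ i : Fin n,
         (∑ j ∈ Finset.Iic i.castSucc, ω j * (y j - θ j)) * (θ i.succ - θ i.castSucc) = 0)) :=
  isMinOn_iff.symm.trans <|
    (isMinOn_irObj_iff (fun i => (hω i).le) convex_setOf_monotone hθ).trans
      (forall_monotone_sum_mul_sub_nonpos_iff hθ)
end

section
/- Let {B₁, …, B_K} be a partition of {1, …, n} into consecutive blocks Bₖ = {pₖ, …, qₖ} with q_{k} + 1 = p_{k+1}, and define θ ∈ ℝⁿ by θᵢ = Av(Bₖ) for i ∈ Bₖ, where Av(B) = (Σ_{i∈B} ωᵢ yᵢ)/(Σ_{i∈B} ωᵢ). If (a) Av(B₁) ≤ Av(B₂) ≤ … ≤ Av(B_K) and (b) for every block Bₖ = {pₖ, …, qₖ} and every i with pₖ ≤ i ≤ qₖ one has Σ_{j=pₖ}^{i} ωⱼ(yⱼ − Av(Bₖ)) ≥ 0, then θ is the optimal solution of the isotonic regression problem. In particular, the PAV algorithm, which terminates with a partition satisfying (a) and (b), returns the optimal solution. -/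
open Finset

section AbelSummation

variable {ι R : Type*} [LinearOrder ι] [CommRing R] [LinearOrder R] [IsOrderedRing R]

theorem sum_mul_le_sum_mul_of_prefix_sum_nonneg (s : Finset ι) {g T : ι → R} (hT : Monotone T)
    (hg : ∀ m ∈ s, 0 ≤ ∑ j ∈ s with j ≤ m, g j) {c : ι} (hc : ∀ j ∈ s, j ≤ c) :
    ∑ j ∈ s, g j * T j ≤ (∑ j ∈ s, g j) * T c := by
  classical
  induction s using Finset.induction_on_max generalizing c with
  | empty => simp
  | insert a s hlt ih =>
    have ha : a ∉ s := fun h => (hlt a h).false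
    have hprefix : ∀ m ∈ s, {j ∈ insert a s | j ≤ m} = {j ∈ s | j ≤ m} := fun m hm => by
      rw [filter_insert, if_neg (hlt m hm).not_ge]
    have hs : ∑ j ∈ s, g j * T j ≤ (∑ j ∈ s, g j) * T a :=
      ih (fun m hm => hprefix m hm ▸ hg m (mem_insert_of_mem hm)) fun j hj => (hlt j hj).le
    have htotal : 0 ≤ ∑ j ∈ insert a s, g j := by
      have hall : {j ∈ insert a s | j ≤ a} = insert a s :=
        filter_true_of_mem fun j hj => (mem_insert.mp hj).elim le_of_eq fun h => (hlt j h).le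
      simpa only [hall] using hg a (mem_insert_self a s)
    calc ∑ j ∈ insert a s, g j * T j = g a * T a + ∑ j ∈ s, g j * T j := sum_insert ha
      _ ≤ g a * T a + (∑ j ∈ s, g j) * T a := by gcongr
      _ = (∑ j ∈ insert a s, g j) * T a := by rw [sum_insert ha, add_mul]
      _ ≤ (∑ j ∈ insert a s, g j) * T c :=
        mul_le_mul_of_nonneg_left (hT (hc a (mem_insert_self a s))) htotal

theorem sum_mul_nonpos_of_prefix_sum_nonneg_of_sum_eq_zero (s : Finset ι) {g T : ι → R}
    (hT : Monotone T) (hg : ∀ m ∈ s, 0 ≤ ∑ j ∈ s with j ≤ m, g j) (hsum : ∑ j ∈ s, g j = 0) :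
    ∑ j ∈ s, g j * T j ≤ 0 := by
  rcases s.eq_empty_or_nonempty with rfl | hs
  · simp
  · simpa [hsum] using
      sum_mul_le_sum_mul_of_prefix_sum_nonneg s hT hg (c := s.max' hs) (s.le_max' · ·)

end AbelSummation

theorem sum_mul_sub_weightedAvg_eq_zero {ι K : Type*} [Field K] (s : Finset ι) (w y : ι → K)
    (hw : ∑ i ∈ s, w i ≠ 0) :
    ∑ i ∈ s, w i * (y i - (∑ j ∈ s, w j * y j) / ∑ j ∈ s, w j) = 0 := by
  simp only [mul_sub, sum_sub_distrib, ← sum_mul, mul_div_cancel₀ _ hw, sub_self]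

theorem Finset.sum_eq_sum_sum_filter_of_existsUnique {ι κ M : Type*} [Fintype ι] [Fintype κ]
    [AddCommMonoid M] (P : κ → ι → Prop) [∀ k i, Decidable (P k i)] (hP : ∀ i, ∃! k, P k i)
    (f : ι → M) : ∑ i, f i = ∑ k, ∑ i with P k i, f i := by
  classical
  choose c hc hcu using hP
  rw [← sum_fiberwise univ c f]
  refine sum_congr rfl fun k _ => sum_congr (filter_congr fun i _ => ?_) fun _ _ => rfl
  exact ⟨fun h => h ▸ hc i, fun h => (hcu i k h).symm⟩

theorem irObj_le_of_sum_residual_mul_nonpos {n : ℕ} {ω y θ θ' : Fin n → ℝ} (hω : ∀ i, 0 ≤ ω i)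
    (h : ∑ i, ω i * (y i - θ i) * (θ' i - θ i) ≤ 0) : irObj n ω y θ ≤ irObj n ω y θ' := by
  have hexpand : ∑ i, ω i * (y i - θ' i) ^ 2 = ∑ i, ω i * (y i - θ i) ^ 2
      - 2 * ∑ i, ω i * (y i - θ i) * (θ' i - θ i) + ∑ i, ω i * (θ' i - θ i) ^ 2 := by
    rw [mul_sum, ← sum_sub_distrib, ← sum_add_distrib]
    exact sum_congr rfl fun i _ => by ring
  have hquad : 0 ≤ ∑ i, ω i * (θ' i - θ i) ^ 2 := sum_nonneg fun i _ => by have := hω i; positivity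
  unfold irObj
  linarith

section MonotonePartition

variable {α : Type*} [LinearOrder α] {K : ℕ} {b : Fin (K + 1) → α}

theorem Monotone.le_of_castSucc_le_of_lt_succ (hb : Monotone b) {k k' : Fin K} {x x' : α}
    (hx : b k.castSucc ≤ x) (hx' : x' < b k'.succ) (hxx' : x ≤ x') : k ≤ k' := by
  by_contra! h
  exact (((hb (Fin.succ_le_castSucc_iff.mpr h)).trans hx).trans hxx').not_gt hx'

theorem Monotone.existsUnique_castSucc_le_lt_succ (hb : Monotone b) {x : α} (h0 : b 0 ≤ x)
    (hK : x < b (Fin.last K)) : ∃! k : Fin K, b k.castSucc ≤ x ∧ x < b k.succ := by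
  classical
  let S := univ.filter fun j => x < b j
  have hS : S.Nonempty := ⟨Fin.last K, by simpa [S] using hK⟩
  have hj : x < b (S.min' hS) := (mem_filter.mp (S.min'_mem hS)).2
  obtain ⟨k, hk⟩ := Fin.exists_succ_eq_of_ne_zero (x := S.min' hS) fun h0' => by
    rw [h0'] at hj; exact hj.not_ge h0
  have hxk : x < b k.succ := hk ▸ hj
  have hkx : b k.castSucc ≤ x := by
    by_contra! hlt
    have := S.min'_le _ (by simpa [S] using hlt)
    exact (hk ▸ this).not_gt Fin.castSucc_lt_succ
  refine ⟨k, ⟨hkx, hxk⟩, fun k' hk' => le_antisymm ?_ ?_⟩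
  · exact hb.le_of_castSucc_le_of_lt_succ hk'.1 hxk le_rfl
  · exact hb.le_of_castSucc_le_of_lt_succ hkx hk'.2 le_rfl

end MonotonePartition

theorem sum_residual_mul_sub_nonpos_of_prefix_sum_nonneg {ι : Type*} [LinearOrder ι]
    (s : Finset ι) {ω y θ θ' : ι → ℝ} {A : ℝ} (hω : ∀ i ∈ s, 0 < ω i) (hs : s.Nonempty)
    (hA : A = (∑ i ∈ s, ω i * y i) / ∑ i ∈ s, ω i) (hθ : ∀ i ∈ s, θ i = A)
    (hprefix : ∀ m ∈ s, 0 ≤ ∑ j ∈ s with j ≤ m, ω j * (y j - A)) (hθ' : Monotone θ') :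
    ∑ i ∈ s, ω i * (y i - θ i) * (θ' i - θ i) ≤ 0 := by
  have hsum : ∑ i ∈ s, ω i * (y i - A) = 0 := by
    rw [hA]
    exact sum_mul_sub_weightedAvg_eq_zero s ω y (sum_pos hω hs).ne'
  rw [sum_congr rfl fun i hi => by rw [hθ i hi]]
  exact sum_mul_nonpos_of_prefix_sum_nonneg_of_sum_eq_zero s
    (fun _ _ h => sub_le_sub_right (hθ' h) A) hprefix hsum

theorem pav_partition_optimal_general
    (n : ℕ) (y ω : Fin n → ℝ) (hω : ∀ i, 0 < ω i)
    (K : ℕ) (b : Fin (K+1) → ℕ) (hb : StrictMono b)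
    (hb0 : b 0 = 0) (hbK : b (Fin.last K) = n)
    (Av : Fin K → ℝ)
    (hAv : ∀ k : Fin K,
      Av k = (∑ i ∈ Finset.univ.filter
                (fun i : Fin n => b k.castSucc ≤ (i : ℕ) ∧ (i : ℕ) < b k.succ), ω i * y i) /
             (∑ i ∈ Finset.univ.filter
                (fun i : Fin n => b k.castSucc ≤ (i : ℕ) ∧ (i : ℕ) < b k.succ), ω i))
    (θ : Fin n → ℝ)
    (hθ : ∀ k : Fin K, ∀ i : Fin n, b k.castSucc ≤ (i : ℕ) → (i : ℕ) < b k.succ → θ i = Av k)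
    (ha : Monotone Av)
    (hbnd : ∀ k : Fin K, ∀ m : Fin n, b k.castSucc ≤ (m : ℕ) → (m : ℕ) < b k.succ →
      0 ≤ ∑ j ∈ Finset.univ.filter
            (fun j : Fin n => b k.castSucc ≤ (j : ℕ) ∧ (j : ℕ) ≤ (m : ℕ)),
          ω j * (y j - Av k)) :
    Monotone θ ∧ ∀ θ' : Fin n → ℝ, Monotone θ' → irObj n ω y θ ≤ irObj n ω y θ' := by
  have hpart : ∀ i : Fin n, ∃! k : Fin K, b k.castSucc ≤ (i : ℕ) ∧ (i : ℕ) < b k.succ := fun i =>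
    hb.monotone.existsUnique_castSucc_le_lt_succ (hb0.le.trans i.val.zero_le)
      (i.isLt.trans_eq hbK.symm)
  refine ⟨fun i j hij => ?_, fun θ' hθ' => ?_⟩
  · obtain ⟨⟨k, hk⟩, ⟨k', hk'⟩⟩ := And.intro (hpart i).exists (hpart j).exists
    rw [hθ k i hk.1 hk.2, hθ k' j hk'.1 hk'.2]
    exact ha (hb.monotone.le_of_castSucc_le_of_lt_succ hk.1 hk'.2 hij)
  refine irObj_le_of_sum_residual_mul_nonpos (fun i => (hω i).le) ?_
  rw [sum_eq_sum_sum_filter_of_existsUnique _ hpart]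
  refine sum_nonpos fun k _ => sum_residual_mul_sub_nonpos_of_prefix_sum_nonneg _
    (fun i _ => hω i) ?_ (hAv k)
    (fun i hi => hθ k i (mem_filter.mp hi).2.1 (mem_filter.mp hi).2.2) (fun m hm => ?_) hθ'
  · have hlt : b k.castSucc < b k.succ := hb Fin.castSucc_lt_succ
    exact ⟨⟨b k.castSucc, hlt.trans_le (hbK ▸ hb.monotone (Fin.le_last _))⟩, by simp [hlt]⟩
  · obtain ⟨-, hkm, hmk⟩ := mem_filter.mp hm
    rw [filter_filter]
    convert hbnd k m hkm hmk using 2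
    ext j
    simp only [mem_filter, mem_univ, true_and, Fin.le_def]
    omega

/-- If a partition of `{0,…,n-1}` into consecutive blocks (with boundaries `b 0 = 0 < b 1 < … <
b K = n`, block `k` being `{i : b k ≤ i < b (k+1)}`) satisfies (a) the weighted block averages
are nondecreasing and (b) within each block all leading partial sums of `ωⱼ(yⱼ - Av)` are
nonnegative, then the vector `θ` that is constant equal to the block average on each block is
the optimal solution of the isotonic regression problem.  (The PAV algorithm terminates with
such a partition, hence returns the optimal solution.) -/
theorem pav_partition_optimal
    (n : ℕ) (hn : 1 ≤ n) (y ω : Fin n → ℝ) (hω : ∀ i, 0 < ω i)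
    (K : ℕ) (b : Fin (K+1) → ℕ) (hb : StrictMono b)
    (hb0 : b 0 = 0) (hbK : b (Fin.last K) = n)
    (Av : Fin K → ℝ)
    (hAv : ∀ k : Fin K,
      Av k = (∑ i ∈ Finset.univ.filter
                (fun i : Fin n => b k.castSucc ≤ (i : ℕ) ∧ (i : ℕ) < b k.succ), ω i * y i) /
             (∑ i ∈ Finset.univ.filter
                (fun i : Fin n => b k.castSucc ≤ (i : ℕ) ∧ (i : ℕ) < b k.succ), ω i))
    (θ : Fin n → ℝ)
    (hθ : ∀ k : Fin K, ∀ i : Fin n, b k.castSucc ≤ (i : ℕ) → (i : ℕ) < b k.succ → θ i = Av k)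
    (ha : Monotone Av)
    (hbnd : ∀ k : Fin K, ∀ m : Fin n, b k.castSucc ≤ (m : ℕ) → (m : ℕ) < b k.succ →
      0 ≤ ∑ j ∈ Finset.univ.filter
            (fun j : Fin n => b k.castSucc ≤ (j : ℕ) ∧ (j : ℕ) ≤ (m : ℕ)),
          ω j * (y j - Av k)) :
    Monotone θ ∧ ∀ θ' : Fin n → ℝ, Monotone θ' → irObj n ω y θ ≤ irObj n ω y θ' :=
  pav_partition_optimal_general n y ω hω K b hb hb0 hbK Av hAv θ hθ ha hbnd
end

section
/- Let θ* be the optimal solution of the isotonic regression problem and let B = {p, …, q} be a maximal block of consecutive indices on which θ* is constant (i.e., θ*_p = … = θ*_q, and moreover θ*_{p−1} < θ*_p if p > 1 and θ*_q < θ*_{q+1} if q < n). Then the common value of θ* on B equals the weighted average Av(B) = (Σ_{i=p}^q ωᵢ yᵢ)/(Σ_{i=p}^q ωᵢ). -/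
/-- On a maximal constant block `{p,…,q}` of the optimal isotonic regression solution, the
common value equals the weighted average of the data over the block. -/
theorem isotonic_regression_block_average
    (n : ℕ) (hn : 1 ≤ n) (y ω : Fin n → ℝ) (hω : ∀ i, 0 < ω i)
    (θ : Fin n → ℝ) (hmono : Monotone θ)
    (hopt : ∀ θ' : Fin n → ℝ, Monotone θ' → irObj n ω y θ ≤ irObj n ω y θ')
    (p q : Fin n) (hpq : p ≤ q)
    (hconst : ∀ i : Fin n, p ≤ i → i ≤ q → θ i = θ p)
    (hleft : ∀ i : Fin n, (i : ℕ) + 1 = (p : ℕ) → θ i < θ p)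
    (hright : ∀ i : Fin n, (i : ℕ) = (q : ℕ) + 1 → θ q < θ i) :
    θ p = (∑ i ∈ Finset.Icc p q, ω i * y i) / (∑ i ∈ Finset.Icc p q, ω i) := by
  set S : ℝ := ∑ i ∈ Finset.Icc p q, ω i with hSdef
  set T : ℝ := ∑ i ∈ Finset.Icc p q, ω i * y i with hTdef
  have hS : 0 < S := by
    refine Finset.sum_pos (fun i _ => hω i) ⟨p, ?_⟩
    simp [Finset.mem_Icc, hpq]
  set A : ℝ := T - θ p * S with hAdef
  -- the key inequality from optimality
  have key : ∀ ε : ℝ,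
      Monotone (fun i => θ i + if i ∈ Finset.Icc p q then ε else 0) →
      0 ≤ ε^2/2 * S - ε * A := by
    intro ε hm
    have hle := hopt _ hm
    have hdiff : irObj n ω y (fun i => θ i + if i ∈ Finset.Icc p q then ε else 0)
        = irObj n ω y θ + (ε^2/2 * S - ε * A) := by
      simp only [irObj]
      have hterm : ∀ i ∈ Finset.univ (α := Fin n),
          ω i * (y i - (θ i + if i ∈ Finset.Icc p q then ε else 0))^2
          = ω i * (y i - θ i)^2
            + (if i ∈ Finset.Icc p q then ω i * ε^2 - 2*ε*(ω i * y i - θ p * ω i) else 0) := by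
        intro i _
        split_ifs with hi
        · rw [Finset.mem_Icc] at hi
          have hθi : θ i = θ p := hconst i hi.1 hi.2
          rw [hθi]; ring
        · ring
      rw [Finset.sum_congr rfl hterm, Finset.sum_add_distrib]
      rw [Finset.sum_ite_mem, Finset.univ_inter]
      rw [Finset.sum_sub_distrib]
      rw [← Finset.sum_mul, ← Finset.mul_sum, Finset.sum_sub_distrib, ← Finset.mul_sum]
      simp only [hAdef, hSdef, hTdef]
      ring
    rw [hdiff] at hle
    linarith
  -- existence of an admissible neighborhood
  have hLex : ∃ dL > (0:ℝ), ∀ i : Fin n, (i : ℕ) < (p : ℕ) → θ i ≤ θ p - dL := by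
    by_cases hp : 0 < (p : ℕ)
    · have hlt : (p : ℕ) - 1 < n := lt_of_le_of_lt (Nat.sub_le _ _) p.isLt
      refine ⟨θ p - θ ⟨(p : ℕ) - 1, hlt⟩, ?_, ?_⟩
      · have := hleft ⟨(p : ℕ) - 1, hlt⟩ (by simp; omega)
        linarith
      · intro i hi
        have : θ i ≤ θ ⟨(p : ℕ) - 1, hlt⟩ := hmono (by rw [Fin.le_def]; simp; omega)
        linarith
    · exact ⟨1, one_pos, fun i hi => absurd hi (by omega)⟩
  have hRex : ∃ dR > (0:ℝ), ∀ j : Fin n, (q : ℕ) < (j : ℕ) → θ q + dR ≤ θ j := by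
    by_cases hq : (q : ℕ) + 1 < n
    · refine ⟨θ ⟨(q : ℕ) + 1, hq⟩ - θ q, ?_, ?_⟩
      · have := hright ⟨(q : ℕ) + 1, hq⟩ (by simp)
        linarith
      · intro j hj
        have : θ ⟨(q : ℕ) + 1, hq⟩ ≤ θ j := hmono (by rw [Fin.le_def]; simp; omega)
        linarith
    · refine ⟨1, one_pos, fun j hj => ?_⟩
      have := j.isLt; omega
  obtain ⟨dL, hdL, hL⟩ := hLex
  obtain ⟨dR, hdR, hR⟩ := hRex
  have hmon : ∀ ε : ℝ, -dL ≤ ε → ε ≤ dR →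
      Monotone (fun i => θ i + if i ∈ Finset.Icc p q then ε else 0) := by
    intro ε hε1 hε2 i j hij
    simp only [Finset.mem_Icc]
    by_cases hi : p ≤ i ∧ i ≤ q <;> by_cases hj : p ≤ j ∧ j ≤ q
    · rw [if_pos hi, if_pos hj]
      linarith [hmono hij]
    · rw [if_pos hi, if_neg hj]
      have hqj : (q : ℕ) < (j : ℕ) := by
        rcases not_and_or.mp hj with h | h
        · exact absurd (le_trans hi.1 hij) h
        · rw [Fin.le_def] at h; omega
      have h1 : θ i = θ p := hconst i hi.1 hi.2
      have h2 : θ q = θ p := hconst q hpq le_rfl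
      have := hR j hqj
      linarith
    · rw [if_neg hi, if_pos hj]
      have hip : (i : ℕ) < (p : ℕ) := by
        rcases not_and_or.mp hi with h | h
        · rw [Fin.le_def] at h; omega
        · exact absurd (le_trans hij hj.2) h
      have h1 : θ j = θ p := hconst j hj.1 hj.2
      have := hL i hip
      linarith
    · rw [if_neg hi, if_neg hj]
      simpa using hmono hij
  -- conclude A = 0
  have hA0 : A = 0 := by
    by_contra hA
    rcases lt_or_gt_of_ne hA with hneg | hpos
    · -- A < 0 : use negative ε
      set t : ℝ := min dL (-A / S) with htdef
      have ht0 : 0 < t := lt_min hdL (div_pos (by linarith) hS)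
      have ht1 : t ≤ dL := min_le_left _ _
      have ht2 : t ≤ -A / S := min_le_right _ _
      have hk := key (-t) (hmon (-t) (by linarith) (by linarith))
      have : t * S ≤ -A := (le_div_iff₀ hS).mp ht2
      nlinarith
    · set t : ℝ := min dR (A / S) with htdef
      have ht0 : 0 < t := lt_min hdR (div_pos hpos hS)
      have ht1 : t ≤ dR := min_le_left _ _
      have ht2 : t ≤ A / S := min_le_right _ _
      have hk := key t (hmon t (by linarith) ht1)
      have : t * S ≤ A := (le_div_iff₀ hS).mp ht2
      nlinarith
  have : T = θ p * S := by simp only [hAdef] at hA0; linarith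
  rw [this]
  field_simp
end

section
/- Exact penalization of isotonic regression: there exists λ₀ > 0 such that for every λ ≥ λ₀, the unique global minimizer of the (strictly convex) penalized objective φ_λ(θ) = ½ Σ_{i=1}^n ωᵢ(yᵢ − θᵢ)² + λ Σ_{i=1}^{n−1} max(θᵢ − θ_{i+1}, 0) over θ ∈ ℝⁿ equals the unique optimal solution of the isotonic regression problem. -/
/-- The penalty term `∑_{i=1}^{n-1} max(θᵢ − θ_{i+1}, 0)` measuring violation of monotonicity. -/
noncomputable def monoPenalty (n : ℕ) (θ : Fin n → ℝ) : ℝ :=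
  ∑ i : Fin (n-1), max (θ ⟨(i : ℕ), by have := i.isLt; omega⟩ -
    θ ⟨(i : ℕ) + 1, by have := i.isLt; omega⟩) 0

noncomputable def penSum (n : ℕ) (θ : Fin n → ℝ) (i : ℕ) : ℝ :=
  ∑ j : Fin (n-1), if (j : ℕ) < i then
    max (θ ⟨(j : ℕ), by have := j.isLt; omega⟩ -
      θ ⟨(j : ℕ) + 1, by have := j.isLt; omega⟩) 0 else 0

noncomputable def projMono (n : ℕ) (θ : Fin n → ℝ) : Fin n → ℝ :=
  fun i => θ i + penSum n θ (i : ℕ)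

lemma monoPenalty_nonneg (n : ℕ) (θ : Fin n → ℝ) : 0 ≤ monoPenalty n θ :=
  Finset.sum_nonneg fun _ _ => le_max_right _ _

lemma penSum_nonneg (n : ℕ) (θ : Fin n → ℝ) (i : ℕ) : 0 ≤ penSum n θ i :=
  Finset.sum_nonneg fun j _ => by split <;> simp [le_max_right]

lemma penSum_le (n : ℕ) (θ : Fin n → ℝ) (i : ℕ) : penSum n θ i ≤ monoPenalty n θ :=
  Finset.sum_le_sum fun j _ => by split <;> simp [le_max_right]

lemma penSum_succ (n : ℕ) (θ : Fin n → ℝ) (i : ℕ) (hi : i < n - 1) :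
    penSum n θ (i + 1) = penSum n θ i +
      max (θ ⟨i, by omega⟩ - θ ⟨i + 1, by omega⟩) 0 := by
  unfold penSum
  have key : ∀ j : Fin (n-1),
      (if (j : ℕ) < i + 1 then
        max (θ ⟨(j : ℕ), by have := j.isLt; omega⟩ -
          θ ⟨(j : ℕ) + 1, by have := j.isLt; omega⟩) 0 else 0) =
      (if (j : ℕ) < i then
        max (θ ⟨(j : ℕ), by have := j.isLt; omega⟩ -
          θ ⟨(j : ℕ) + 1, by have := j.isLt; omega⟩) 0 else 0) +
      (if j = (⟨i, hi⟩ : Fin (n-1)) then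
        max (θ ⟨(j : ℕ), by have := j.isLt; omega⟩ -
          θ ⟨(j : ℕ) + 1, by have := j.isLt; omega⟩) 0 else 0) := by
    intro j
    rcases lt_trichotomy (j : ℕ) i with h | h | h
    · rw [if_pos (by omega), if_pos h, if_neg (by simp [Fin.ext_iff]; omega)]
      ring
    · rw [if_pos (by omega), if_neg (by omega), if_pos (by simp [Fin.ext_iff, h])]
      ring
    · rw [if_neg (by omega), if_neg (by omega), if_neg (by simp [Fin.ext_iff]; omega)]
      ring
  calc ∑ j : Fin (n-1), (if (j : ℕ) < i + 1 then _ else 0)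
      = ∑ j : Fin (n-1), ((if (j : ℕ) < i then _ else 0) + (if j = (⟨i, hi⟩ : Fin (n-1)) then _ else 0)) :=
        Finset.sum_congr rfl fun j _ => key j
    _ = _ := by
        rw [Finset.sum_add_distrib, Finset.sum_ite_eq' Finset.univ]
        simp

lemma monotone_of_adjacent (n : ℕ) (θ : Fin n → ℝ)
    (h : ∀ i : ℕ, ∀ hi : i < n - 1, θ ⟨i, by omega⟩ ≤ θ ⟨i + 1, by omega⟩) :
    Monotone θ := by
  have key : ∀ d : ℕ, ∀ a b : Fin n, (b : ℕ) = (a : ℕ) + d → θ a ≤ θ b := by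
    intro d
    induction d with
    | zero => intro a b hab; have : a = b := Fin.ext (by omega); rw [this]
    | succ d ih =>
      intro a b hab
      have hb := b.isLt
      have h1 : (a : ℕ) + d < n - 1 := by omega
      have : θ a ≤ θ ⟨(a : ℕ) + d, by omega⟩ := ih a _ rfl
      refine this.trans ?_
      have h2 := h ((a : ℕ) + d) h1
      have hbe : θ b = θ ⟨(a : ℕ) + d + 1, by omega⟩ := by
        congr 1; apply Fin.ext; simp; omega
      rw [hbe]
      exact h2
  intro a b hab
  exact key ((b : ℕ) - (a : ℕ)) a b (by omega)

lemma projMono_monotone (n : ℕ) (θ : Fin n → ℝ) : Monotone (projMono n θ) := by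
  apply monotone_of_adjacent
  intro i hi
  unfold projMono
  simp only [Fin.val_mk]
  rw [penSum_succ n θ i hi]
  have key : ∀ A B S : ℝ, A + S ≤ B + (S + max (A - B) 0) := fun A B S => by
    have := le_max_left (A - B) 0; linarith
  exact key _ _ _

lemma monoPenalty_eq_zero_of_monotone (n : ℕ) (θ : Fin n → ℝ) (h : Monotone θ) :
    monoPenalty n θ = 0 := by
  apply Finset.sum_eq_zero
  intro j _
  have : θ ⟨(j : ℕ), by have := j.isLt; omega⟩ ≤ θ ⟨(j : ℕ) + 1, by have := j.isLt; omega⟩ :=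
    h (by simp [Fin.le_def])
  simp [max_eq_right, sub_nonpos.mpr this]

lemma monotone_of_monoPenalty_eq_zero (n : ℕ) (θ : Fin n → ℝ) (h : monoPenalty n θ = 0) :
    Monotone θ := by
  apply monotone_of_adjacent
  intro i hi
  have := (Finset.sum_eq_zero_iff_of_nonneg (fun j _ => le_max_right _ _)).mp h ⟨i, hi⟩
    (Finset.mem_univ _)
  have h2 : θ ⟨i, by omega⟩ - θ ⟨i + 1, by omega⟩ ≤ 0 := by
    rw [← this]; exact le_max_left _ _
  linarith

lemma abs_sub_projMono_le (n : ℕ) (θ : Fin n → ℝ) (i : Fin n) :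
    |θ i - projMono n θ i| ≤ monoPenalty n θ := by
  unfold projMono
  rw [show θ i - (θ i + penSum n θ i) = -penSum n θ i by ring, abs_neg,
    abs_of_nonneg (penSum_nonneg n θ i)]
  exact penSum_le n θ i

lemma irObj_projMono_le (n : ℕ) (ω y θ : Fin n → ℝ) (hω : ∀ i, 0 < ω i) (B : ℝ)
    (hB1 : ∀ i, |y i - θ i| ≤ B) (hB2 : monoPenalty n θ ≤ B) :
    irObj n ω y (projMono n θ) ≤
      irObj n ω y θ + (3/2) * B * (∑ i, ω i) * monoPenalty n θ := by
  set P := monoPenalty n θ with hP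
  have hP0 : 0 ≤ P := monoPenalty_nonneg n θ
  have quad : ∀ e d : ℝ, |e| ≤ B → |d| ≤ P → (e + d)^2 ≤ e^2 + 3*B*P := by
    intro e d he hd
    obtain ⟨he1, he2⟩ := abs_le.mp he
    obtain ⟨hd1, hd2⟩ := abs_le.mp hd
    nlinarith [mul_nonneg (sub_nonneg.mpr he2) (sub_nonneg.mpr (neg_le.mp hd1)),
      mul_nonneg (sub_nonneg.mpr (neg_le.mp he1)) (sub_nonneg.mpr hd2),
      mul_nonneg (sub_nonneg.mpr hd2) (sub_nonneg.mpr (neg_le.mp hd1))]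
  have hsum : ∑ i, ω i * (y i - projMono n θ i)^2 ≤
      ∑ i, (ω i * (y i - θ i)^2 + ω i * (3*B*P)) := by
    apply Finset.sum_le_sum
    intro i _
    have hd : |θ i - projMono n θ i| ≤ P := abs_sub_projMono_le n θ i
    have hq := quad (y i - θ i) (θ i - projMono n θ i) (hB1 i) hd
    have : (y i - θ i + (θ i - projMono n θ i)) = y i - projMono n θ i := by ring
    rw [this] at hq
    have := mul_le_mul_of_nonneg_left hq (le_of_lt (hω i))
    linarith [this]
  rw [Finset.sum_add_distrib] at hsum
  have h2 : ∑ i, ω i * (3*B*P) = (∑ i, ω i) * (3*B*P) := by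
    rw [← Finset.sum_mul]
  unfold irObj
  rw [h2] at hsum
  linarith

lemma irObj_nonneg (n : ℕ) (ω y θ : Fin n → ℝ) (hω : ∀ i, 0 < ω i) :
    0 ≤ irObj n ω y θ :=
  mul_nonneg (by norm_num)
    (Finset.sum_nonneg fun i _ => mul_nonneg (hω i).le (sq_nonneg _))

lemma abs_le_K (n : ℕ) (ω y θ : Fin n → ℝ) (hω : ∀ i, 0 < ω i) (A : ℝ) (hA0 : 0 ≤ A)
    (h : irObj n ω y θ ≤ A) (i : Fin n) :
    |y i - θ i| ≤ max 1 (∑ j, 2*A/ω j) := by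
  have h1 : ω i * (y i - θ i)^2 ≤ ∑ j, ω j * (y j - θ j)^2 :=
    Finset.single_le_sum (f := fun j => ω j * (y j - θ j)^2)
      (fun j _ => mul_nonneg (hω j).le (sq_nonneg _)) (Finset.mem_univ i)
  have h2 : ω i * (y i - θ i)^2 ≤ 2*A := by
    unfold irObj at h; linarith
  have h3 : (y i - θ i)^2 ≤ 2*A/ω i := by
    rw [le_div_iff₀ (hω i)]; linarith
  have h4 : 2*A/ω i ≤ ∑ j, 2*A/ω j :=
    Finset.single_le_sum (fun j _ => div_nonneg (by linarith) (hω j).le) (Finset.mem_univ i)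
  rcases le_or_gt (|y i - θ i|) 1 with h5 | h5
  · exact h5.trans (le_max_left _ _)
  · have h6 : |y i - θ i| ≤ (y i - θ i)^2 := by
      have := abs_nonneg (y i - θ i)
      nlinarith [sq_abs (y i - θ i)]
    exact le_max_of_le_right (by linarith)

lemma monoPenalty_le_of_bdd (n : ℕ) (y θ : Fin n → ℝ) (K : ℝ) (hK0 : 0 ≤ K)
    (hK : ∀ i, |y i - θ i| ≤ K) :
    monoPenalty n θ ≤ (n : ℝ) * (2*K + 2*(∑ i, |y i|)) := by
  set Y := ∑ i, |y i| with hY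
  have hY0 : 0 ≤ Y := Finset.sum_nonneg fun i _ => abs_nonneg _
  have hYi : ∀ i : Fin n, |y i| ≤ Y := fun i =>
    Finset.single_le_sum (fun j _ => abs_nonneg (y j)) (Finset.mem_univ i)
  have step : ∀ j : Fin (n-1),
      max (θ ⟨(j : ℕ), by have := j.isLt; omega⟩ -
        θ ⟨(j : ℕ) + 1, by have := j.isLt; omega⟩) 0 ≤ 2*K + 2*Y := by
    intro j
    have hj := j.isLt
    set a : Fin n := ⟨(j : ℕ), by omega⟩
    set b : Fin n := ⟨(j : ℕ) + 1, by omega⟩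
    have h1 : |y a - θ a| ≤ K := hK a
    have h2 : |y b - θ b| ≤ K := hK b
    have h3 : |y a| ≤ Y := hYi a
    have h4 : |y b| ≤ Y := hYi b
    obtain ⟨h1a, h1b⟩ := abs_le.mp h1
    obtain ⟨h2a, h2b⟩ := abs_le.mp h2
    obtain ⟨h3a, h3b⟩ := abs_le.mp h3
    obtain ⟨h4a, h4b⟩ := abs_le.mp h4
    apply max_le _ (by linarith)
    linarith
  calc monoPenalty n θ ≤ ∑ _j : Fin (n-1), (2*K + 2*Y) := Finset.sum_le_sum fun j _ => step j
    _ = ((n-1 : ℕ) : ℝ) * (2*K + 2*Y) := by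
        rw [Finset.sum_const, Finset.card_univ, Fintype.card_fin, nsmul_eq_mul]
    _ ≤ (n : ℝ) * (2*K + 2*Y) := by
        apply mul_le_mul_of_nonneg_right _ (by linarith)
        exact_mod_cast Nat.sub_le n 1

/-- Exact penalization of isotonic regression: there exists `λ₀ > 0` such that for all
`λ ≥ λ₀`, a vector minimizes the penalized objective
`φ_λ(θ) = ½ ∑ ωᵢ(yᵢ − θᵢ)² + λ ∑ max(θᵢ − θ_{i+1}, 0)` over `ℝⁿ` iff it is the optimal
solution of the isotonic regression problem. -/
theorem isotonic_regression_exact_penalty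
    (n : ℕ) (hn : 2 ≤ n) (y ω : Fin n → ℝ) (hω : ∀ i, 0 < ω i) :
    ∃ lam₀ : ℝ, 0 < lam₀ ∧ ∀ lam : ℝ, lam₀ ≤ lam → ∀ θ : Fin n → ℝ,
      (∀ θ' : Fin n → ℝ,
          irObj n ω y θ + lam * monoPenalty n θ ≤ irObj n ω y θ' + lam * monoPenalty n θ') ↔
      (Monotone θ ∧ ∀ θ' : Fin n → ℝ, Monotone θ' → irObj n ω y θ ≤ irObj n ω y θ') := by
  classical
  set W := ∑ i, ω i with hW
  have hW0 : 0 < W := Finset.sum_pos (fun i _ => hω i) ⟨⟨0, by omega⟩, Finset.mem_univ _⟩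
  set A := irObj n ω y (fun _ => 0) with hA
  have hA0 : 0 ≤ A := irObj_nonneg n ω y _ hω
  set K := max 1 (∑ j, 2*A/ω j) with hK
  have hK1 : (1:ℝ) ≤ K := le_max_left _ _
  set Y := ∑ i, |y i| with hY
  have hY0 : 0 ≤ Y := Finset.sum_nonneg fun i _ => abs_nonneg _
  set B := A + K + (n : ℝ) * (2*K + 2*Y) + 1 with hB
  have hn0 : (0:ℝ) ≤ (n : ℝ) := Nat.cast_nonneg n
  have hnKY : 0 ≤ (n : ℝ) * (2*K + 2*Y) := mul_nonneg hn0 (by linarith)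
  have hKB : K ≤ B := by linarith
  have hAB : A ≤ B := by linarith
  have hB1 : (1:ℝ) ≤ B := by linarith
  have hpenB : (n : ℝ) * (2*K + 2*Y) ≤ B := by linarith
  have hc0 : (0:ℝ) ≤ (3/2) * B * W := by positivity
  refine ⟨(3/2) * B * W + 1, by linarith, ?_⟩
  intro lam hlam θ
  have hlam1 : (1:ℝ) ≤ lam := by linarith
  have hpen0 : monoPenalty n (fun _ => 0) = 0 :=
    monoPenalty_eq_zero_of_monotone n _ monotone_const
  constructor
  · intro hmin
    have hPnn := monoPenalty_nonneg n θ
    have h0 := hmin (fun _ => 0)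
    rw [hpen0, mul_zero, add_zero] at h0
    have hlamP : 0 ≤ lam * monoPenalty n θ := mul_nonneg (by linarith) hPnn
    have hio : irObj n ω y θ ≤ A := by linarith
    have hio0 := irObj_nonneg n ω y θ hω
    have hPA : monoPenalty n θ ≤ A := by
      nlinarith [mul_le_mul_of_nonneg_right hlam1 hPnn]
    have hbd : ∀ i, |y i - θ i| ≤ B := fun i =>
      (abs_le_K n ω y θ hω A hA0 hio i).trans hKB
    have hmaster := irObj_projMono_le n ω y θ hω B hbd (hPA.trans hAB)
    have h1 := hmin (projMono n θ)
    rw [monoPenalty_eq_zero_of_monotone n _ (projMono_monotone n θ), mul_zero, add_zero] at h1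
    have h3 : lam * monoPenalty n θ ≤ (3/2) * B * W * monoPenalty n θ := by linarith
    have hPz : monoPenalty n θ = 0 := by
      apply le_antisymm _ hPnn
      nlinarith [mul_le_mul_of_nonneg_right hlam hPnn]
    refine ⟨monotone_of_monoPenalty_eq_zero n θ hPz, ?_⟩
    intro θ' hθ'
    have h4 := hmin θ'
    rw [hPz, monoPenalty_eq_zero_of_monotone n θ' hθ', mul_zero, add_zero, add_zero] at h4
    exact h4
  · rintro ⟨hmono, hopt⟩ θ'
    rw [monoPenalty_eq_zero_of_monotone n θ hmono, mul_zero, add_zero]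
    have hAθ : irObj n ω y θ ≤ A := hopt _ monotone_const
    have hP'nn := monoPenalty_nonneg n θ'
    rcases le_or_gt (irObj n ω y θ) (irObj n ω y θ') with h | h
    · have : 0 ≤ lam * monoPenalty n θ' := mul_nonneg (by linarith) hP'nn
      linarith
    · have hio' : irObj n ω y θ' ≤ A := by linarith
      have hK' : ∀ i, |y i - θ' i| ≤ K := fun i => abs_le_K n ω y θ' hω A hA0 hio' i
      have hbd' : ∀ i, |y i - θ' i| ≤ B := fun i => (hK' i).trans hKB
      have hPB' : monoPenalty n θ' ≤ B :=
        (monoPenalty_le_of_bdd n y θ' K (by linarith) hK').trans hpenB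
      have hmaster := irObj_projMono_le n ω y θ' hω B hbd' hPB'
      have h2 : irObj n ω y θ ≤ irObj n ω y (projMono n θ') :=
        hopt _ (projMono_monotone n θ')
      have h5 : (3/2) * B * W * monoPenalty n θ' ≤ lam * monoPenalty n θ' :=
        mul_le_mul_of_nonneg_right (by linarith) hP'nn
      linarith
end
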